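/- Let A⁺, A⁻ : ℝ → ℝ be continuous and u⁺, u⁻, û ∈ ℝ. Assume the Rankine–Hugoniot condition A⁺(u⁺) = A⁻(u⁻), that û lies strictly between u⁻ and u⁺, and that the Kruzkov entropy inequality holds at every c that lies strictly between u⁻ and u⁺ with c ≠ û. Then sign(u⁺−u⁻)·A⁺(u⁺) ≤ sign(u⁺−u⁻)·A⁺(û) and sign(u⁺−u⁻)·A⁺(u⁺) ≤ sign(u⁺−u⁻)·A⁻(û). -/

import Mathlib

/-!
Write `s = sign (u⁺ - u⁻)`. At a state `c` strictly between `û` and `u⁺` only the indicator on the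
`+` side is active, and after substituting the Rankine–Hugoniot condition the entropy inequality
reads `s·A⁺(u⁺) ≤ s·A⁺(c)`; at `c` strictly between `u⁻` and `û` it reads `s·A⁺(u⁺) ≤ s·A⁻(c)`.
Letting `c → û` and using continuity of the fluxes gives both inequalities.
-/

open MeasureTheory Filter Set

/-- The Kruzkov entropy inequality at `c` for data `(um, up, uh)`:
`A⁺(u⁺)·sign(u⁺−c) − 2·sign(u⁺−û)·A⁺(c)·𝟙_{(û,u⁺)}(c) ≤
 A⁻(u⁻)·sign(u⁻−c) − 2·sign(u⁻−û)·A⁻(c)·𝟙_{(û,u⁻)}(c)`. -/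
def KruzkovIneq (Ap Am : ℝ → ℝ) (um up uh c : ℝ) : Prop :=
  Ap up * Real.sign (up - c) -
      2 * Real.sign (up - uh) * Ap c * Set.indicator (Set.uIoo uh up) (1 : ℝ → ℝ) c
    ≤ Am um * Real.sign (um - c) -
      2 * Real.sign (um - uh) * Am c * Set.indicator (Set.uIoo uh um) (1 : ℝ → ℝ) c

theorem le_of_forall_mem_uIoo {α β : Type*} [TopologicalSpace α] [LinearOrder α]
    [OrderTopology α] [DenselyOrdered α] [TopologicalSpace β] [Preorder β] [ClosedIciTopology β]
    {f : α → β} (hf : Continuous f) {a b : α} {K : β} (hab : a ≠ b)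
    (h : ∀ c ∈ uIoo a b, K ≤ f c) : K ≤ f a :=
  (isClosed_Ici.preimage hf).closure_subset_iff.2 h (closure_uIoo hab ▸ left_mem_uIcc)

namespace Set

variable {α : Type*} [LinearOrder α] {a b c : α}

theorem uIoo_left_subset_of_mem (hc : c ∈ uIoo a b) : uIoo c a ⊆ uIoo a b := by
  grind [uIoo]

theorem uIoo_right_subset_of_mem (hc : c ∈ uIoo a b) : uIoo c b ⊆ uIoo a b := by
  grind [uIoo]

theorem disjoint_uIoo_of_mem (hc : c ∈ uIoo a b) : Disjoint (uIoo c a) (uIoo c b) := by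
  rw [disjoint_left]
  grind [uIoo]

end Set

namespace Real

variable {a b c : ℝ}

theorem sign_right_sub_of_mem_uIoo (hc : c ∈ uIoo a b) : sign (b - c) = sign (b - a) := by
  rcases lt_or_gt_of_ne (nonempty_uIoo.1 ⟨c, hc⟩) with h | h
  · rw [uIoo_of_lt h] at hc
    rw [sign_of_pos (sub_pos.2 hc.2), sign_of_pos (sub_pos.2 h)]
  · rw [uIoo_of_gt h] at hc
    rw [sign_of_neg (sub_neg.2 hc.1), sign_of_neg (sub_neg.2 h)]

theorem sign_left_sub_of_mem_uIoo (hc : c ∈ uIoo a b) : sign (a - c) = -sign (b - a) := by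
  rw [sign_right_sub_of_mem_uIoo (uIoo_comm a b ▸ hc), ← neg_sub, sign_neg]

end Real

namespace KruzkovIneq

variable {Ap Am : ℝ → ℝ} {um up uh c : ℝ}

theorem sign_mul_le_of_mem_uIoo_right (hK : KruzkovIneq Ap Am um up uh c)
    (hRH : Ap up = Am um) (huh : uh ∈ uIoo um up) (hc : c ∈ uIoo uh up) :
    Real.sign (up - um) * Ap up ≤ Real.sign (up - um) * Ap c := by
  have hc' : c ∈ uIoo um up := uIoo_right_subset_of_mem huh hc
  rw [KruzkovIneq, ← hRH, Real.sign_right_sub_of_mem_uIoo hc',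
    Real.sign_right_sub_of_mem_uIoo huh, Real.sign_left_sub_of_mem_uIoo hc',
    Real.sign_left_sub_of_mem_uIoo huh, indicator_of_mem hc,
    indicator_of_notMem ((disjoint_uIoo_of_mem huh).notMem_of_mem_right hc)] at hK
  simp only [Pi.one_apply] at hK
  linarith

theorem sign_mul_le_of_mem_uIoo_left (hK : KruzkovIneq Ap Am um up uh c)
    (hRH : Ap up = Am um) (huh : uh ∈ uIoo um up) (hc : c ∈ uIoo uh um) :
    Real.sign (up - um) * Ap up ≤ Real.sign (up - um) * Am c := by
  have hc' : c ∈ uIoo um up := uIoo_left_subset_of_mem huh hc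
  rw [KruzkovIneq, ← hRH, Real.sign_right_sub_of_mem_uIoo hc',
    Real.sign_right_sub_of_mem_uIoo huh, Real.sign_left_sub_of_mem_uIoo hc',
    Real.sign_left_sub_of_mem_uIoo huh, indicator_of_mem hc,
    indicator_of_notMem ((disjoint_uIoo_of_mem huh).notMem_of_mem_left hc)] at hK
  simp only [Pi.one_apply] at hK
  linarith

end KruzkovIneq

theorem stmt_7 (Ap Am : ℝ → ℝ) (hAp : Continuous Ap) (hAm : Continuous Am)
    (up um uh : ℝ)
    (hRH : Ap up = Am um)
    (huh : uh ∈ Set.uIoo um up)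
    (hkruz : ∀ c ∈ Set.uIoo um up, c ≠ uh → KruzkovIneq Ap Am um up uh c) :
    Real.sign (up - um) * Ap up ≤ Real.sign (up - um) * Ap uh ∧
    Real.sign (up - um) * Ap up ≤ Real.sign (up - um) * Am uh := by
  have hkruz_near {v c : ℝ} (hv : uIoo uh v ⊆ uIoo um up) (hc : c ∈ uIoo uh v) :
      KruzkovIneq Ap Am um up uh c :=
    hkruz c (hv hc) (ne_of_mem_of_not_mem hc left_notMem_uIoo)
  constructor
  · refine le_of_forall_mem_uIoo (continuous_const.mul hAp)
      (ne_of_mem_of_not_mem huh right_notMem_uIoo) fun c hc => ?_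
    exact (hkruz_near (uIoo_right_subset_of_mem huh) hc).sign_mul_le_of_mem_uIoo_right hRH huh hc
  · refine le_of_forall_mem_uIoo (continuous_const.mul hAm)
      (ne_of_mem_of_not_mem huh left_notMem_uIoo) fun c hc => ?_
    exact (hkruz_near (uIoo_left_subset_of_mem huh) hc).sign_mul_le_of_mem_uIoo_left hRH huh hc
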